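/- arXiv:1701.04246 — 2 statements merged into one kernel-verified Lean document; each statement's English description precedes it below -/
import Mathlib

section
/- Let A and B be Hermitian complex q×q matrices and let D := B - A. Then the open matricial interval (A,B) := {X Hermitian : A < X < B} (where A < X means X - A is positive definite) is nonempty if and only if D is positive definite. In this case, (A,B) = {A + √D · K · √D : K Hermitian with 0 < K < I}. -/
open Matrix ComplexOrder

/-- The positive semidefinite square root of a positive semidefinite matrix (the definition
`Matrix.PosSemidef.sqrt` of the older Mathlib, which has since been removed). -/
noncomputable def Matrix.PosSemidef.sqrt {n : Type*} [Fintype n] [DecidableEq n] {𝕜 : Type*}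
    [RCLike 𝕜] {A : Matrix n n 𝕜} (hA : A.PosSemidef) : Matrix n n 𝕜 :=
  (hA.1.eigenvectorUnitary : Matrix n n 𝕜) * diagonal (((↑) : ℝ → 𝕜) ∘ (√·) ∘ hA.1.eigenvalues) *
    (star hA.1.eigenvectorUnitary : Matrix n n 𝕜)

/-! With `S = √(B - A)`, which is Hermitian and invertible, every matrix is `A + S K S` for a
unique `K`, and `B - (A + S K S) = S (1 - K) S`. Congruence by the invertible Hermitian `S`
preserves positive definiteness in both directions, so `A + S K S ∈ (A, B)` exactly when
`0 < K < 1`. Nonemptiness: `B - A = (B - X) + (X - A)` for any `X ∈ (A, B)`, and conversely the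
midpoint `(A + B) / 2` lies in `(A, B)` when `B - A` is positive definite. -/

namespace Matrix

variable {n : Type*}

section Sqrt

variable [Fintype n] [DecidableEq n] {𝕜 : Type*} [RCLike 𝕜] {A : Matrix n n 𝕜}

theorem PosSemidef.sqrt_eq_cfc (hA : A.PosSemidef) : hA.sqrt = cfc Real.sqrt A := by
  rw [hA.isHermitian.cfc_eq, IsHermitian.cfc, Unitary.conjStarAlgAut_apply]
  rfl

theorem PosSemidef.isHermitian_sqrt (hA : A.PosSemidef) : hA.sqrt.IsHermitian := by
  rw [hA.sqrt_eq_cfc]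
  exact cfc_predicate _ _

theorem PosSemidef.sqrt_mul_self (hA : A.PosSemidef) : hA.sqrt * hA.sqrt = A := by
  have hspec : ∀ x ∈ spectrum ℝ A, 0 ≤ x := by
    rw [hA.isHermitian.spectrum_real_eq_range_eigenvalues]
    rintro - ⟨i, rfl⟩
    exact hA.eigenvalues_nonneg i
  rw [hA.sqrt_eq_cfc, ← cfc_mul ..]
  exact (cfc_congr fun x hx => Real.mul_self_sqrt (hspec x hx)).trans
    (cfc_id' ℝ A hA.isHermitian.isSelfAdjoint)

theorem PosDef.isUnit_sqrt (hA : A.PosDef) : IsUnit hA.posSemidef.sqrt :=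
  isUnit_of_mul_isUnit_left (hA.posSemidef.sqrt_mul_self ▸ hA.isUnit)

end Sqrt

section Interval

variable {R : Type*} [CommRing R] [PartialOrder R] [StarRing R]

/-- The open interval `(A, B)` for the strict Loewner order. It is not `Set.Ioo A B`: under
`open scoped MatrixOrder`, `X < Y` means `X ≤ Y ∧ X ≠ Y`, not that `Y - X` is positive definite. -/
def openInterval (A B : Matrix n n R) : Set (Matrix n n R) :=
  {X | X.IsHermitian ∧ (X - A).PosDef ∧ (B - X).PosDef}

theorem mem_openInterval_iff {A B X : Matrix n n R} (hA : A.IsHermitian) :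
    X ∈ openInterval A B ↔ (X - A).PosDef ∧ (B - X).PosDef := by
  refine ⟨And.right, fun h => ⟨?_, h⟩⟩
  simpa using hA.add h.1.isHermitian

variable [Fintype n] [DecidableEq n]

theorem IsHermitian.posDef_mul_mul_self_iff {S K : Matrix n n R} (hS : S.IsHermitian)
    (hSu : IsUnit S) : (S * K * S).PosDef ↔ K.PosDef := by
  simpa [hS.star_eq] using hSu.posDef_star_left_conjugate_iff (x := K)

variable {A B S : Matrix n n R}

theorem add_mul_mul_mem_openInterval_iff (hA : A.IsHermitian) (hS : S.IsHermitian)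
    (hSu : IsUnit S) (hSS : S * S = B - A) {K : Matrix n n R} :
    A + S * K * S ∈ openInterval A B ↔ K.PosDef ∧ (1 - K).PosDef := by
  have hupper : B - (A + S * K * S) = S * (1 - K) * S := by
    rw [Matrix.mul_sub, Matrix.sub_mul, Matrix.mul_one, hSS]
    abel
  rw [mem_openInterval_iff hA, add_sub_cancel_left, hupper, hS.posDef_mul_mul_self_iff hSu,
    hS.posDef_mul_mul_self_iff hSu]

theorem openInterval_eq_setOf_mul_mul (hA : A.IsHermitian) (hS : S.IsHermitian)
    (hSu : IsUnit S) (hSS : S * S = B - A) :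
    openInterval A B = {Y | ∃ K : Matrix n n R,
      K.IsHermitian ∧ K.PosDef ∧ (1 - K).PosDef ∧ Y = A + S * K * S} := by
  ext X
  constructor
  · intro hX
    have hdet : IsUnit S.det := (isUnit_iff_isUnit_det S).1 hSu
    have hX_eq : X = A + S * (S⁻¹ * (X - A) * S⁻¹) * S := by
      simp only [← Matrix.mul_assoc, mul_nonsing_inv S hdet, Matrix.one_mul]
      rw [Matrix.mul_assoc, nonsing_inv_mul S hdet, Matrix.mul_one, add_sub_cancel]
    rw [hX_eq, add_mul_mul_mem_openInterval_iff hA hS hSu hSS] at hX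
    exact ⟨_, hX.1.isHermitian, hX.1, hX.2, hX_eq⟩
  · rintro ⟨K, -, hK, hK1, rfl⟩
    exact (add_mul_mul_mem_openInterval_iff hA hS hSu hSS).2 ⟨hK, hK1⟩

end Interval

theorem openInterval_nonempty_iff {𝕜 : Type*} [RCLike 𝕜] [Fintype n] {A B : Matrix n n 𝕜}
    (hA : A.IsHermitian) : (openInterval A B).Nonempty ↔ (B - A).PosDef := by
  constructor
  · rintro ⟨X, -, hXA, hBX⟩
    simpa using hBX.add hXA
  · intro hD
    have hD' : ((2⁻¹ : ℝ) • (B - A)).PosDef := hD.smul (by norm_num)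
    refine ⟨(2⁻¹ : ℝ) • (A + B), (mem_openInterval_iff hA).2 ⟨?_, ?_⟩⟩
    · rw [show (2⁻¹ : ℝ) • (A + B) - A = (2⁻¹ : ℝ) • (B - A) by module]
      exact hD'
    · rw [show B - (2⁻¹ : ℝ) • (A + B) = (2⁻¹ : ℝ) • (B - A) by module]
      exact hD'

end Matrix

theorem stmt_1_general (q : ℕ) (A B : Matrix (Fin q) (Fin q) ℂ)
    (hA : A.IsHermitian) :
    ((∃ X : Matrix (Fin q) (Fin q) ℂ, X.IsHermitian ∧ (X - A).PosDef ∧ (B - X).PosDef)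
      ↔ (B - A).PosDef) ∧
    ∀ hD : (B - A).PosDef,
      {X : Matrix (Fin q) (Fin q) ℂ | X.IsHermitian ∧ (X - A).PosDef ∧ (B - X).PosDef} =
        {Y : Matrix (Fin q) (Fin q) ℂ | ∃ K : Matrix (Fin q) (Fin q) ℂ,
          K.IsHermitian ∧ K.PosDef ∧ (1 - K).PosDef ∧
          Y = A + hD.posSemidef.sqrt * K * hD.posSemidef.sqrt} :=
  ⟨openInterval_nonempty_iff hA, fun hD =>
    openInterval_eq_setOf_mul_mul hA hD.posSemidef.isHermitian_sqrt hD.isUnit_sqrt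
      hD.posSemidef.sqrt_mul_self⟩

/-- The open matricial interval `(A,B)` is nonempty iff `D = B - A` is positive
definite, in which case `(A,B) = {A + √D K √D : 0 < K < I}`. -/
theorem stmt_1 (q : ℕ) (A B : Matrix (Fin q) (Fin q) ℂ)
    (hA : A.IsHermitian) (hB : B.IsHermitian) :
    ((∃ X : Matrix (Fin q) (Fin q) ℂ, X.IsHermitian ∧ (X - A).PosDef ∧ (B - X).PosDef)
      ↔ (B - A).PosDef) ∧
    ∀ hD : (B - A).PosDef,
      {X : Matrix (Fin q) (Fin q) ℂ | X.IsHermitian ∧ (X - A).PosDef ∧ (B - X).PosDef} =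
        {Y : Matrix (Fin q) (Fin q) ℂ | ∃ K : Matrix (Fin q) (Fin q) ℂ,
          K.IsHermitian ∧ K.PosDef ∧ (1 - K).PosDef ∧
          Y = A + hD.posSemidef.sqrt * K * hD.posSemidef.sqrt} :=
  stmt_1_general q A B hA
end

section
/- Let α < β be real numbers, let n ≥ 0, and let s_0, ..., s_{2n+2} be complex q×q matrices. If the Hankel matrix H^{(c)}_n := (-αβ s_{j+k} + (α+β) s_{j+k+1} - s_{j+k+2})_{j,k=0}^n is positive semidefinite and H_{n+1} := (s_{j+k})_{j,k=0}^{n+1} is positive semidefinite, then both H^{(a)}_n := (-α s_{j+k} + s_{j+k+1})_{j,k=0}^n and H^{(b)}_n := (β s_{j+k} - s_{j+k+1})_{j,k=0}^n are positive semidefinite. -/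
/-!
Fix a vector `x` and let `h`, `k`, `l` be the (real) values at `x` of the quadratic forms of the
Hankel matrices of `s_j`, `s_{j+1}`, `s_{j+2}` of size `n + 1`. These three matrices are the blocks
of a compression of `H_{n+1}`, so `h - 2tk + t²l ≥ 0` for every real `t`; hence `h ≥ 0` and
`k² ≤ hl`. Then `(k - αh)(βh - k) = h · x*H^{(c)}_n x + (hl - k²) ≥ 0`, while the two factors sum
to `(β - α)h ≥ 0`, so both factors are nonnegative.
-/

open Matrix ComplexOrder

/-- Block Hankel matrix `(t_{j+k})_{j,k=0}^{m-1}` built from a sequence of `q×q` matrices,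
with `m` block rows and columns. -/
def hankelBlk (q m : ℕ) (t : ℕ → Matrix (Fin q) (Fin q) ℂ) :
    Matrix (Fin m × Fin q) (Fin m × Fin q) ℂ :=
  Matrix.of fun ja kb => t ((ja.1 : ℕ) + (kb.1 : ℕ)) ja.2 kb.2

theorem mul_le_and_le_mul_of_quadratic_nonneg {h k l α β : ℝ} (hαβ : α ≤ β)
    (hq : ∀ t : ℝ, 0 ≤ h - 2 * t * k + t ^ 2 * l) (hc : 0 ≤ -(α * β) * h + (α + β) * k - l) :
    α * h ≤ k ∧ k ≤ β * h := by
  have hh : 0 ≤ h := by simpa using hq 0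
  have hkl : k ^ 2 ≤ h * l := by
    have := discrim_le_zero fun t => (hq t).trans_eq (by ring : _ = l * (t * t) + -(2 * k) * t + h)
    rw [discrim] at this
    nlinarith
  have hprod : 0 ≤ (k - α * h) * (β * h - k) := by nlinarith [mul_nonneg hh hc]
  have hsum : 0 ≤ (k - α * h) + (β * h - k) := by nlinarith [mul_nonneg (sub_nonneg.2 hαβ) hh]
  constructor <;> nlinarith

namespace Matrix

variable {ι 𝕜 : Type*} [Fintype ι] [RCLike 𝕜]

theorem PosSemidef.sub_smul_add_smul_of_fromBlocks {A B C : Matrix ι ι 𝕜}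
    (h : (fromBlocks A B B C).PosSemidef) (t : ℝ) :
    (A - (2 * t : 𝕜) • B + (t ^ 2 : 𝕜) • C).PosSemidef := by
  classical
  have := h.conjTranspose_mul_mul_same (fromRows (1 : Matrix ι ι 𝕜) (-(t : 𝕜) • 1))
  convert this using 1
  simp [conjTranspose_fromRows_eq_fromCols_conjTranspose, fromCols_mul_fromBlocks,
    fromCols_mul_fromRows]
  module

theorem IsHermitian.posSemidef_of_re_nonneg {A : Matrix ι ι 𝕜} (hA : A.IsHermitian)
    (h : ∀ x, 0 ≤ RCLike.re (star x ⬝ᵥ (A *ᵥ x))) : A.PosSemidef :=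
  .of_dotProduct_mulVec_nonneg hA fun x =>
    RCLike.nonneg_iff.mpr ⟨h x, hA.im_star_dotProduct_mulVec_self x⟩

theorem posSemidef_sub_smul_and_smul_sub_of_fromBlocks {A B C : Matrix ι ι 𝕜} {α β : ℝ}
    (hαβ : α ≤ β) (h : (fromBlocks A B B C).PosSemidef)
    (hc : (-((α : 𝕜) * β) • A + ((α : 𝕜) + β) • B - C).PosSemidef) :
    (-(α : 𝕜) • A + B).PosSemidef ∧ ((β : 𝕜) • A - B).PosSemidef := by
  obtain ⟨hA, hB, -, -⟩ := isHermitian_fromBlocks_iff.mp h.isHermitian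
  replace hA : A.IsHermitian := hA
  replace hB : B.IsHermitian := by rwa [IsHermitian]
  have hself (r : ℝ) : IsSelfAdjoint (r : 𝕜) := RCLike.conj_ofReal r
  have key (x : ι → 𝕜) := mul_le_and_le_mul_of_quadratic_nonneg hαβ
    (fun t => by
      simpa [add_mulVec, sub_mulVec, smul_mulVec, dotProduct_add, dotProduct_sub]
        using (h.sub_smul_add_smul_of_fromBlocks t).re_dotProduct_nonneg x)
    (by simpa [add_mulVec, sub_mulVec, neg_mulVec, smul_mulVec, dotProduct_add, dotProduct_sub,
      dotProduct_neg] using hc.re_dotProduct_nonneg x)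
  constructor
  · refine ((hA.smul (hself α).neg).add hB).posSemidef_of_re_nonneg fun x => ?_
    simpa [add_mulVec, neg_mulVec, smul_mulVec, dotProduct_add, dotProduct_neg, RCLike.smul_re]
      using (key x).1
  · refine ((hA.smul (hself β)).sub hB).posSemidef_of_re_nonneg fun x => ?_
    simpa [sub_mulVec, smul_mulVec, dotProduct_sub, RCLike.smul_re] using (key x).2

end Matrix

section hankelBlk

variable {q m : ℕ}

@[simp] theorem hankelBlk_add (t u : ℕ → Matrix (Fin q) (Fin q) ℂ) :
    hankelBlk q m (fun j => t j + u j) = hankelBlk q m t + hankelBlk q m u := rfl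

@[simp] theorem hankelBlk_sub (t u : ℕ → Matrix (Fin q) (Fin q) ℂ) :
    hankelBlk q m (fun j => t j - u j) = hankelBlk q m t - hankelBlk q m u := rfl

@[simp] theorem hankelBlk_smul (c : ℂ) (t : ℕ → Matrix (Fin q) (Fin q) ℂ) :
    hankelBlk q m (fun j => c • t j) = c • hankelBlk q m t := rfl

theorem hankelBlk_succ_submatrix (t : ℕ → Matrix (Fin q) (Fin q) ℂ) :
    (hankelBlk q (m + 1) t).submatrix
        (Sum.elim (Prod.map Fin.castSucc id) (Prod.map Fin.succ id))
        (Sum.elim (Prod.map Fin.castSucc id) (Prod.map Fin.succ id)) =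
      fromBlocks (hankelBlk q m t) (hankelBlk q m fun j => t (j + 1))
        (hankelBlk q m fun j => t (j + 1)) (hankelBlk q m fun j => t (j + 2)) := by
  ext (⟨j, a⟩ | ⟨j, a⟩) (⟨k, b⟩ | ⟨k, b⟩) <;> simp [hankelBlk] <;> ring_nf

end hankelBlk

/-- if `H^{(c)}_n` and `H_{n+1}` are positive semidefinite (for real `α < β`),
then both `H^{(a)}_n` and `H^{(b)}_n` are positive semidefinite. -/
theorem stmt_12 (q n : ℕ) (α β : ℝ) (hαβ : α < β) (s : ℕ → Matrix (Fin q) (Fin q) ℂ)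
    (hc : (hankelBlk q (n + 1)
      (fun j => -((α : ℂ) * β) • s j + ((α : ℂ) + β) • s (j + 1) - s (j + 2))).PosSemidef)
    (h1 : (hankelBlk q (n + 2) s).PosSemidef) :
    (hankelBlk q (n + 1) (fun j => -(α : ℂ) • s j + s (j + 1))).PosSemidef ∧
      (hankelBlk q (n + 1) (fun j => (β : ℂ) • s j - s (j + 1))).PosSemidef := by
  have hblocks := hankelBlk_succ_submatrix s ▸ h1.submatrix _
  simp only [hankelBlk_add, hankelBlk_sub, hankelBlk_smul] at hc ⊢
  exact posSemidef_sub_smul_and_smul_sub_of_fromBlocks hαβ.le hblocks hc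
end
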